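/- arXiv:2505.23665 — 3 statements merged into one kernel-verified Lean document; each statement's English description precedes it below -/
import Mathlib

section
/- Let n ∈ ℕ and let X be a Peano continuum. Then the set of π_n-wild points of X is closed in X; in particular, the π_n-wild set w_n(X), with its subspace topology, is a compact metrizable space. -/
/-!
A limit `x` of wild points is wild. Near a wild point `u` there are essential spheres of
arbitrarily small diameter based at `u`, and a short path from `u` to `x` re-bases such a sphere
at `x` without changing its free homotopy class: collapse a cap around the basepoint to the
basepoint, then run the path along the cap.

Short paths between close points exist because a compact, locally connected metric space is
uniformly locally connected: joining two close points by ever finer chains inside small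
connected sets, and reading each chain as a step function on `[0, 1]`, gives a uniformly Cauchy
sequence whose limit is a path.
-/

open Filter Topology

/-- The unit `n`-sphere in `ℝ^(n+1)`. -/
abbrev Sph (n : ℕ) : Type :=
  Metric.sphere (0 : EuclideanSpace ℝ (Fin (n + 1))) 1

/-- The basepoint `s₀ = (1,0,…,0)` of the unit `n`-sphere. -/
noncomputable def spherePt (n : ℕ) : Sph n :=
  ⟨EuclideanSpace.single 0 1, by
    simp [mem_sphere_zero_iff_norm, EuclideanSpace.norm_single]⟩

/-- A continuous map `S^n → X` is essential if it is not homotopic to a constant map. -/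
def Essential {n : ℕ} {X : Type*} [TopologicalSpace X] (f : C(Sph n, X)) : Prop :=
  ∀ x : X, ¬ f.Homotopic (ContinuousMap.const (Sph n) x)

/-- `x` is a `π_n`-wild point of `X` if there is a sequence of essential maps
`S^n → X` based at `x` converging to the constant map at `x` in the compact-open
topology. -/
def IsWildPoint (n : ℕ) {X : Type*} [TopologicalSpace X] (x : X) : Prop :=
  ∃ f : ℕ → C(Sph n, X),
    (∀ k, f k (spherePt n) = x) ∧
    (∀ k, Essential (f k)) ∧
    Tendsto f atTop (𝓝 (ContinuousMap.const (Sph n) x))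

/-- The `π_n`-wild set of `X`. -/
def wildSet (n : ℕ) (X : Type*) [TopologicalSpace X] : Set X :=
  {x | IsWildPoint n x}

/-- A continuous map is `π_n`-injective if precomposition reflects inessentiality. -/
def PiNInjective (n : ℕ) {X Y : Type*} [TopologicalSpace X] [TopologicalSpace Y]
    (f : C(X, Y)) : Prop :=
  ∀ g : C(Sph n, X),
    (∃ y : Y, (f.comp g).Homotopic (ContinuousMap.const (Sph n) y)) →
    ∃ x : X, g.Homotopic (ContinuousMap.const (Sph n) x)

/-- `X` is `π_n`-rigid at `x`. -/
def IsRigidAt (n : ℕ) {X : Type*} [TopologicalSpace X] (x : X) : Prop :=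
  ∃ f : ℕ → C(Sph n, X),
    (∀ k, f k (spherePt n) = x) ∧
    (∀ k, Essential (f k)) ∧
    Tendsto f atTop (𝓝 (ContinuousMap.const (Sph n) x)) ∧
    ∀ β : C(unitInterval, X), β 0 = x →
      ∀ H : ℕ → C(Sph n × unitInterval, X),
        (∀ k s, H k (s, 0) = f k s) →
        (∀ k t, H k (spherePt n, t) = β t) →
        Tendsto H atTop (𝓝 (β.comp (ContinuousMap.snd (α := Sph n)))) →
        β 1 = x

open Metric

def UniformlyLocallyConnected (X : Type*) [PseudoMetricSpace X] : Prop :=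
  ∀ ε > 0, ∃ δ > 0, ∀ x y : X, dist x y < δ →
    ∃ C : Set X, IsPreconnected C ∧ x ∈ C ∧ y ∈ C ∧ C ⊆ ball x ε

section Chains

variable {X : Type*} [PseudoMetricSpace X]

theorem uniformlyLocallyConnected_of_compactSpace [CompactSpace X] [LocallyConnectedSpace X] :
    UniformlyLocallyConnected X := by
  intro ε hε
  have hV (z : X) : ∃ V ⊆ ball z (ε / 2), IsOpen V ∧ z ∈ V ∧ IsConnected V :=
    locallyConnectedSpace_iff_subsets_isOpen_isConnected.mp ‹_› z _
      (ball_mem_nhds z (by linarith))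
  choose V hVball hVopen hzV hVconn using hV
  obtain ⟨δ, hδ, hcover⟩ := lebesgue_number_lemma_of_metric isCompact_univ hVopen
    (fun z _ => Set.mem_iUnion.mpr ⟨z, hzV z⟩)
  refine ⟨δ, hδ, fun x y hxy => ?_⟩
  obtain ⟨z, hz⟩ := hcover x (Set.mem_univ x)
  refine ⟨V z, (hVconn z).isPreconnected, hz (mem_ball_self hδ), hz (mem_ball'.mpr hxy),
    fun w hw => ?_⟩
  have hwz := mem_ball.mp (hVball z hw)
  have hxz := mem_ball.mp (hVball z (hz (mem_ball_self hδ)))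
  rw [mem_ball]
  linarith [dist_triangle_right w x z]

def IsDistChain (δ : ℝ) (x y : X) (L : ℕ) (P : ℕ → X) : Prop :=
  P 0 = x ∧ (∀ i, L ≤ i → P i = y) ∧ ∀ i, dist (P i) (P (i + 1)) < δ

namespace IsDistChain

variable {δ : ℝ} {x y z : X} {L L' : ℕ} {P Q : ℕ → X}

theorem pos (hP : IsDistChain δ x y L P) : 0 < δ :=
  dist_nonneg.trans_lt (hP.2.2 0)

theorem mono (hP : IsDistChain δ x y L P) (hL : L ≤ L') : IsDistChain δ x y L' P :=
  ⟨hP.1, fun i hi => hP.2.1 i (hL.trans hi), hP.2.2⟩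

theorem const (hδ : 0 < δ) (x : X) (L : ℕ) : IsDistChain δ x x L fun _ => x :=
  ⟨rfl, fun _ _ => rfl, fun _ => by simpa using hδ⟩

theorem pair (hxy : dist x y < δ) :
    IsDistChain δ x y 1 fun i => if i = 0 then x else y := by
  refine ⟨rfl, fun i hi => if_neg (by omega), fun i => ?_⟩
  rcases i with _ | i
  · simpa using hxy
  · simpa using dist_nonneg.trans_lt hxy

theorem append (hP : IsDistChain δ x y L P) (hQ : IsDistChain δ y z L' Q) :
    IsDistChain δ x z (L + L') fun i => if i ≤ L then P i else Q (i - L) := by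
  refine ⟨by simp [hP.1], fun i hi => ?_, fun i => ?_⟩
  · dsimp only
    split_ifs with h
    · rw [hP.2.1 i (by omega), ← hQ.1, hQ.2.1 0 (by omega)]
    · exact hQ.2.1 _ (by omega)
  · by_cases h : i + 1 ≤ L
    · simpa [h, show i ≤ L by omega] using hP.2.2 i
    by_cases h' : i = L
    · subst h'
      simpa [← hQ.1, hP.2.1 i le_rfl] using hQ.2.2 0
    · simpa [h, show ¬i ≤ L by omega, show i + 1 - L = i - L + 1 by omega] using hQ.2.2 (i - L)

end IsDistChain

theorem IsPreconnected.exists_isDistChain {C : Set X} (hC : IsPreconnected C) {δ : ℝ}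
    (hδ : 0 < δ) {x y : X} (hx : x ∈ C) (hy : y ∈ C) :
    ∃ L P, IsDistChain δ x y L P ∧ ∀ i, P i ∈ C := by
  refine hC.induction₂' (fun a b => ∃ L P, IsDistChain δ a b L P ∧ ∀ i, P i ∈ C)
    (fun a ha => ?_) (fun a b c _ _ _ ⟨L, P, hP, hPC⟩ ⟨L', Q, hQ, hQC⟩ => ?_) hx hy
  · filter_upwards [inter_mem_nhdsWithin C (ball_mem_nhds a hδ), self_mem_nhdsWithin]
      with b hb hbC
    have hab : dist b a < δ := hb.2
    refine ⟨⟨1, _, IsDistChain.pair (dist_comm a b ▸ hab), fun i => ?_⟩,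
      ⟨1, _, IsDistChain.pair hab, fun i => ?_⟩⟩ <;> split_ifs <;> assumption
  · exact ⟨_, _, hP.append hQ, fun i => by split_ifs; exacts [hPC i, hQC _]⟩

end Chains

noncomputable def chainInterp {X : Type*} (L : ℕ) (P : ℕ → X) (t : unitInterval) : X :=
  P ⌊(t : ℝ) * L⌋₊

theorem chainInterp_zero {X : Type*} (L : ℕ) (P : ℕ → X) : chainInterp L P 0 = P 0 := by
  simp [chainInterp]

theorem chainInterp_one {X : Type*} (L : ℕ) (P : ℕ → X) : chainInterp L P 1 = P L := by
  simp [chainInterp]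

section Refinement

variable {X : Type*} [PseudoMetricSpace X] {δ : ℝ} {x y : X} {L : ℕ} {P : ℕ → X}

theorem IsDistChain.dist_chainInterp_lt (hP : IsDistChain δ x y L P) {t t' : unitInterval}
    (htt' : dist t t' < 1 / (L + 1)) : dist (chainInterp L P t) (chainInterp L P t') < δ := by
  have hL : (0 : ℝ) < L + 1 := by positivity
  have hclose : |(t : ℝ) * L - t' * L| < 1 := by
    rw [← sub_mul, abs_mul, Nat.abs_cast]
    rw [Subtype.dist_eq, Real.dist_eq, lt_div_iff₀ hL] at htt'
    nlinarith [abs_nonneg ((t : ℝ) - t')]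
  have hfloor {a b : ℝ} (hb : 0 ≤ b) (hab : a < b + 1) : ⌊a⌋₊ ≤ ⌊b⌋₊ + 1 := by
    rw [← Nat.floor_add_one hb]
    exact Nat.floor_mono hab.le
  have h₁ := hfloor (a := (t : ℝ) * L) (mul_nonneg t'.2.1 L.cast_nonneg)
    (by linarith [(abs_sub_lt_iff.mp hclose).1])
  have h₂ := hfloor (a := (t' : ℝ) * L) (mul_nonneg t.2.1 L.cast_nonneg)
    (by linarith [(abs_sub_lt_iff.mp hclose).2])
  unfold chainInterp
  rcases (by omega : ⌊(t' : ℝ) * L⌋₊ = ⌊(t : ℝ) * L⌋₊ ∨ ⌊(t' : ℝ) * L⌋₊ = ⌊(t : ℝ) * L⌋₊ + 1 ∨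
      ⌊(t : ℝ) * L⌋₊ = ⌊(t' : ℝ) * L⌋₊ + 1) with h | h | h <;> rw [h]
  · simpa using hP.pos
  · exact hP.2.2 _
  · exact dist_comm (P _) _ ▸ hP.2.2 _

theorem isDistChain_blocks {N : ℕ} {Q : ℕ → ℕ → X} (hP : P 0 = x)
    (hQ : ∀ j, IsDistChain δ (P j) (P (j + 1)) N (Q j)) (hQy : ∀ j, L ≤ j → ∀ r, Q j r = y) :
    IsDistChain δ x y (L * (N + 1)) fun k => Q (k / (N + 1)) (k % (N + 1)) := by
  have hN : 0 < N + 1 := N.succ_pos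
  have hdivmod (j r : ℕ) (hr : r < N + 1) :
      ((N + 1) * j + r) / (N + 1) = j ∧ ((N + 1) * j + r) % (N + 1) = r := by
    simp [Nat.mul_add_div hN, Nat.div_eq_of_lt hr, Nat.mod_eq_of_lt hr]
  refine ⟨by simp [hP, (hQ 0).1], fun k hk => hQy _ ((Nat.le_div_iff_mul_le hN).2 hk) _,
    fun k => ?_⟩
  obtain ⟨j, r, hr, rfl⟩ : ∃ j r, r < N + 1 ∧ k = (N + 1) * j + r :=
    ⟨k / (N + 1), k % (N + 1), Nat.mod_lt k hN, (Nat.div_add_mod k (N + 1)).symm⟩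
  dsimp only
  rw [(hdivmod j r hr).1, (hdivmod j r hr).2]
  by_cases hrN : r < N
  · rw [add_assoc, (hdivmod j (r + 1) (by omega)).1, (hdivmod j (r + 1) (by omega)).2]
    exact (hQ j).2.2 r
  · rw [show (N + 1) * j + r + 1 = (N + 1) * (j + 1) + 0 by rw [mul_add]; omega,
      (hdivmod (j + 1) 0 hN).1, (hdivmod (j + 1) 0 hN).2, (hQ (j + 1)).1,
      ← (hQ j).2.1 r (by omega)]
    simpa using (hQ j).pos

theorem IsDistChain.exists_refinement {ε δ' : ℝ} (hP : IsDistChain δ x y L P)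
    (hC : ∀ a b : X, dist a b < δ → ∃ C : Set X, IsPreconnected C ∧ a ∈ C ∧ b ∈ C ∧ C ⊆ ball a ε)
    (hδ' : 0 < δ') :
    ∃ L' P', IsDistChain δ' x y L' P' ∧
      ∀ t, dist (chainInterp L' P' t) (chainInterp L P t) < ε := by
  choose C hCconn hPC hPC' hCball using fun j => hC (P j) (P (j + 1)) (hP.2.2 j)
  have hQ (j : ℕ) : ∃ m Q, IsDistChain δ' (P j) (P (j + 1)) m Q ∧ (∀ r, Q r ∈ C j) ∧
      (L ≤ j → ∀ r, Q r = y) := by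
    by_cases hj : L ≤ j
    · refine ⟨0, fun _ => y, ?_, fun _ => ?_, fun _ _ => rfl⟩
      · rw [hP.2.1 j hj, hP.2.1 (j + 1) (by omega)]
        exact IsDistChain.const hδ' y 0
      · exact hP.2.1 j hj ▸ hPC j
    · obtain ⟨m, Q, hQ, hQC⟩ := (hCconn j).exists_isDistChain hδ' (hPC j) (hPC' j)
      exact ⟨m, Q, hQ, hQC, fun h => absurd h hj⟩
  choose m Q hQ hQC hQy using hQ
  -- Padding every sub-chain to the common length `N` makes the `j`-th one run exactly over
  -- the times `[j / L, (j + 1) / L]`.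
  set N := (Finset.range L).sup m
  have hQN (j : ℕ) : IsDistChain δ' (P j) (P (j + 1)) N (Q j) := by
    by_cases hj : j < L
    · exact (hQ j).mono (Finset.le_sup (Finset.mem_range.2 hj))
    · rw [show Q j = fun _ => y from funext (hQy j (by omega)), hP.2.1 j (by omega),
        hP.2.1 (j + 1) (by omega)]
      exact IsDistChain.const hδ' y N
  refine ⟨L * (N + 1), _, isDistChain_blocks hP.1 hQN hQy, fun t => ?_⟩
  have hfloor : ⌊(t : ℝ) * ↑(L * (N + 1))⌋₊ / (N + 1) = ⌊(t : ℝ) * L⌋₊ := by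
    rw [← Nat.floor_div_natCast]
    congr 1
    push_cast
    field_simp
  simp only [chainInterp, hfloor]
  exact mem_ball.mp (hCball _ (hQC _ _))

end Refinement

theorem uniformContinuous_of_forall_approx {α β : Type*} [PseudoMetricSpace α]
    [PseudoMetricSpace β] {f : α → β}
    (h : ∀ η > 0, ∃ g : α → β, (∀ a, dist (f a) (g a) < η) ∧
      ∃ r > 0, ∀ a b, dist a b < r → dist (g a) (g b) < η) :
    UniformContinuous f := by
  refine Metric.uniformContinuous_iff.2 fun ε hε => ?_
  obtain ⟨g, hfg, r, hr, hg⟩ := h (ε / 3) (by positivity)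
  refine ⟨r, hr, fun {a b} hab => ?_⟩
  calc dist (f a) (f b) ≤ dist (f a) (g a) + dist (g a) (g b) + dist (g b) (f b) :=
        dist_triangle4 _ _ _ _
    _ < ε / 3 + ε / 3 + ε / 3 := by
        gcongr
        exacts [hfg a, hg a b hab, dist_comm (f b) (g b) ▸ hfg b]
    _ = ε := by ring

theorem exists_uniformContinuous_limit_of_le_geometric_two {α X : Type*} [PseudoMetricSpace α]
    [PseudoMetricSpace X] [CompleteSpace X] {C : ℝ} {g : ℕ → α → X}
    (hg : ∀ i a, dist (g i a) (g (i + 1) a) ≤ C / 2 / 2 ^ i)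
    (hosc : ∀ i, ∃ r > 0, ∀ a b, dist a b < r → dist (g i a) (g i b) ≤ C / 2 ^ i) :
    ∃ γ : α → X, UniformContinuous γ ∧
      ∀ a, Tendsto (g · a) atTop (𝓝 (γ a)) ∧ ∀ i, dist (g i a) (γ a) ≤ C / 2 ^ i := by
  choose γ hγ using fun a => cauchySeq_tendsto_of_complete (cauchySeq_of_le_geometric_two (hg · a))
  have hgγ (i : ℕ) (a : α) : dist (g i a) (γ a) ≤ C / 2 ^ i :=
    dist_le_of_le_geometric_two_of_tendsto (hg · a) (hγ a) i
  refine ⟨γ, uniformContinuous_of_forall_approx fun η hη => ?_, fun a => ⟨hγ a, (hgγ · a)⟩⟩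
  have hlim : Tendsto (fun i : ℕ => C / 2 ^ i) atTop (𝓝 0) :=
    tendsto_const_nhds.div_atTop (tendsto_pow_atTop_atTop_of_one_lt one_lt_two)
  obtain ⟨i, hi⟩ := (hlim.eventually (gt_mem_nhds hη)).exists
  obtain ⟨r, hr, hosc⟩ := hosc i
  exact ⟨g i, fun a => (dist_comm (γ a) _ ▸ hgγ i a).trans_lt hi, r, hr,
    fun a b hab => (hosc a b hab).trans_lt hi⟩

theorem UniformlyLocallyConnected.exists_path {X : Type*} [MetricSpace X] [CompleteSpace X]
    (hX : UniformlyLocallyConnected X) {ε : ℝ} (hε : 0 < ε) :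
    ∃ δ > 0, ∀ x y : X, dist x y < δ → ∃ γ : Path x y, ∀ t, dist (γ t) x < ε := by
  have hε_div (i : ℕ) : 0 < ε / 2 / 2 / 2 ^ i := by positivity
  choose δ hδ hC using fun i => hX _ (hε_div i)
  set δ' : ℕ → ℝ := fun i => min (δ i) (ε / 2 / 2 / 2 ^ i)
  have hδ' (i : ℕ) : 0 < δ' i := lt_min (hδ i) (hε_div i)
  refine ⟨δ' 0, hδ' 0, fun x y hxy => ?_⟩
  have hstep (i : ℕ) (c : ℕ × (ℕ → X)) : ∃ c' : ℕ × (ℕ → X),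
      IsDistChain (δ' i) x y c.1 c.2 → IsDistChain (δ' (i + 1)) x y c'.1 c'.2 ∧
        ∀ t, dist (chainInterp c'.1 c'.2 t) (chainInterp c.1 c.2 t) < ε / 2 / 2 / 2 ^ i := by
    by_cases hc : IsDistChain (δ' i) x y c.1 c.2
    · obtain ⟨L', P', h⟩ := hc.exists_refinement
        (fun a b hab => hC i a b (hab.trans_le (min_le_left _ _))) (hδ' (i + 1))
      exact ⟨(L', P'), fun _ => h⟩
    · exact ⟨c, fun h => absurd h hc⟩
  choose next hnext using hstep
  let c (i : ℕ) : ℕ × (ℕ → X) := Nat.rec (1, fun k => if k = 0 then x else y) next i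
  have hc (i : ℕ) : IsDistChain (δ' i) x y (c i).1 (c i).2 := by
    induction i with
    | zero => exact IsDistChain.pair hxy
    | succ i ih => exact (hnext i _ ih).1
  let g (i : ℕ) : unitInterval → X := chainInterp (c i).1 (c i).2
  obtain ⟨γ, hγ_cont, hγ⟩ := exists_uniformContinuous_limit_of_le_geometric_two (g := g)
    (fun i t => (dist_comm (g i t) _ ▸ (hnext i _ (hc i)).2 t).le)
    fun i => ⟨1 / ((c i).1 + 1), by positivity, fun t t' htt' =>
      ((hc i).dist_chainInterp_lt htt').le.trans <| (min_le_right _ _).trans <|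
        div_le_div_of_nonneg_right (half_le_self (by positivity)) (by positivity)⟩
  have hγ_eq {t : unitInterval} {z : X} (h : ∀ i, g i t = z) : γ t = z :=
    tendsto_nhds_unique (hγ t).1 (by simp only [h, tendsto_const_nhds])
  have hg0 (t : unitInterval) : dist (g 0 t) x < δ' 0 := by
    change dist (if ⌊(t : ℝ) * ((1 : ℕ) : ℝ)⌋₊ = 0 then x else y) x < δ' 0
    split_ifs
    exacts [(dist_self x).symm ▸ hδ' 0, hxy.trans_eq' (dist_comm x y)]
  refine ⟨⟨⟨γ, hγ_cont.continuous⟩, hγ_eq fun i => (chainInterp_zero _ _).trans (hc i).1,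
    hγ_eq fun i => (chainInterp_one _ _).trans ((hc i).2.1 _ le_rfl)⟩, fun t => ?_⟩
  calc dist (γ t) x ≤ dist (g 0 t) (γ t) + dist (g 0 t) x := dist_triangle_left _ _ _
    _ < ε / 2 / 2 ^ 0 + ε / 2 / 2 / 2 ^ 0 :=
        add_lt_add_of_le_of_lt ((hγ t).2 0) ((hg0 t).trans_le (min_le_right _ _))
    _ < ε := by norm_num; linarith

section WildPoints

variable {n : ℕ} {X : Type*}

theorem Essential.of_homotopic [TopologicalSpace X] {f g : C(Sph n, X)} (hf : Essential f)
    (hfg : f.Homotopic g) : Essential g :=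
  fun x hg => hf x (hfg.trans hg)

theorem isWildPoint_iff_forall_dist_lt [MetricSpace X] {x : X} :
    IsWildPoint n x ↔ ∀ ε > 0, ∃ f : C(Sph n, X),
      f (spherePt n) = x ∧ Essential f ∧ ∀ s, dist (f s) x < ε := by
  have hclosure : IsWildPoint n x ↔ ContinuousMap.const (Sph n) x ∈
      closure {f : C(Sph n, X) | f (spherePt n) = x ∧ Essential f} := by
    simp only [IsWildPoint, mem_closure_iff_seq_limit, Set.mem_ofPred_eq, forall_and, and_assoc]
  rw [hclosure, Metric.mem_closure_iff]
  refine forall₂_congr fun ε hε => exists_congr fun f => ?_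
  simp only [Set.mem_ofPred_eq, ContinuousMap.dist_lt_iff hε, ContinuousMap.const_apply,
    dist_comm x, and_assoc]

end WildPoints

section SphereCollapse

variable {n : ℕ}

theorem eq_neg_of_smul_add_smul_eq_zero {E : Type*} [NormedAddCommGroup E] [NormedSpace ℝ E]
    {u v : E} (hu : ‖u‖ = 1) (hv : ‖v‖ = 1) {μ : ℝ} (h : (1 - μ) • u + μ • v = 0) : v = -u := by
  have hnorm : |1 - μ| = |μ| := by
    simpa [norm_smul, hu, hv] using congrArg norm (eq_neg_of_add_eq_zero_left h)
  obtain hμ | hμ := abs_eq_abs.mp hnorm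
  · rw [show 1 - μ = μ by linarith, ← smul_add, smul_eq_zero] at h
    exact eq_neg_of_add_eq_zero_right (h.resolve_left (by linarith))
  · linarith

private noncomputable def capWeight (s : Sph n) : ℝ :=
  max 0 (min 1 (2 * (s : EuclideanSpace ℝ (Fin (n + 1))) 0))

@[fun_prop]
private theorem continuous_capWeight : Continuous (capWeight (n := n)) := by
  unfold capWeight; fun_prop

private noncomputable def collapseVec (t : unitInterval) (s : Sph n) :
    EuclideanSpace ℝ (Fin (n + 1)) :=
  (1 - t * capWeight s) • (s : EuclideanSpace ℝ (Fin (n + 1))) +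
    (t * capWeight s) • (spherePt n : EuclideanSpace ℝ (Fin (n + 1)))

private theorem collapseVec_ne_zero (t : unitInterval) (s : Sph n) : collapseVec t s ≠ 0 := by
  intro h
  have hs := eq_neg_of_smul_add_smul_eq_zero (norm_eq_of_mem_sphere s)
    (norm_eq_of_mem_sphere (spherePt n)) h
  have hw : capWeight s = 0 := by
    have : (s : EuclideanSpace ℝ (Fin (n + 1))) 0 = -1 := by
      rw [← neg_eq_iff_eq_neg.mpr hs]; simp [spherePt]
    simp [capWeight, this]
  simp only [collapseVec, hw, mul_zero, sub_zero, one_smul, zero_smul, add_zero] at h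
  simpa [h] using norm_eq_of_mem_sphere s

theorem exists_homotopic_id_eq_spherePt_on_cap :
    ∃ σ : C(Sph n, Sph n), (ContinuousMap.id (Sph n)).Homotopic σ ∧
      ∀ s : Sph n, 1 / 2 ≤ (s : EuclideanSpace ℝ (Fin (n + 1))) 0 → σ s = spherePt n := by
  have hcont : Continuous fun p : unitInterval × Sph n => collapseVec p.1 p.2 := by
    unfold collapseVec; fun_prop
  have hmem (p : unitInterval × Sph n) :
      ‖collapseVec p.1 p.2‖⁻¹ • collapseVec p.1 p.2 ∈ sphere 0 1 := by
    simp [norm_smul, collapseVec_ne_zero]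
  let K : C(unitInterval × Sph n, Sph n) :=
    ⟨fun p => ⟨_, hmem p⟩, Continuous.subtype_mk ((hcont.norm.inv₀ fun p =>
      norm_ne_zero_iff.2 (collapseVec_ne_zero p.1 p.2)).smul hcont) hmem⟩
  refine ⟨⟨fun s => K (1, s), by fun_prop⟩,
    ⟨⟨K, fun s => Subtype.ext ?_, fun _ => rfl⟩⟩, fun s hs => Subtype.ext ?_⟩
  · simp [K, collapseVec, norm_eq_of_mem_sphere s]
  · have hs' : 1 ≤ 2 * (s : EuclideanSpace ℝ (Fin (n + 1))) 0 := by linarith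
    have hw : capWeight s = 1 := by simp [capWeight, min_eq_left hs']
    simp [K, collapseVec, hw, norm_eq_of_mem_sphere (spherePt n)]

end SphereCollapse

theorem exists_homotopic_of_path {X : Type*} [TopologicalSpace X] {n : ℕ} (f : C(Sph n, X))
    {u x : X} (hfu : f (spherePt n) = u) (γ : Path u x) :
    ∃ g : C(Sph n, X), g (spherePt n) = x ∧ f.Homotopic g ∧
      ∀ s, g s ∈ Set.range f ∪ Set.range γ := by
  obtain ⟨σ, hσ, hσs⟩ := exists_homotopic_id_eq_spherePt_on_cap (n := n)
  let φ (s : Sph n) : ℝ := 2 * (s : EuclideanSpace ℝ (Fin (n + 1))) 0 - 1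
  have hφ : Continuous φ := by fun_prop
  let H (p : unitInterval × Sph n) : X :=
    if φ p.2 ≤ 0 then f (σ p.2) else γ (Set.projIcc 0 1 zero_le_one (p.1 * φ p.2))
  have hH : Continuous H := by
    refine Continuous.if_le (by fun_prop) (γ.continuous.comp (continuous_projIcc.comp
      (by fun_prop))) (hφ.comp continuous_snd) continuous_const fun p hp => ?_
    rw [hp, mul_zero, Set.projIcc_left, hσs p.2 (by linarith [hp]), hfu]
    exact γ.source.symm
  have hH₀ (s : Sph n) : H (0, s) = f (σ s) := by
    by_cases hs : φ s ≤ 0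
    · simp [H, hs]
    · simp only [H, hs, if_false, Set.Icc.coe_zero, zero_mul, Set.projIcc_left]
      rw [hσs s (by simp only [φ] at hs; linarith), hfu]
      exact γ.source
  let g : C(Sph n, X) := ⟨fun s => H (1, s), by fun_prop⟩
  refine ⟨g, ?_, (ContinuousMap.Homotopic.refl f).comp hσ |>.trans
    ⟨⟨⟨H, hH⟩, hH₀, fun _ => rfl⟩⟩, fun s => ?_⟩
  · have h1 : φ (spherePt n) = 1 := by norm_num [φ, spherePt]
    simp only [g, ContinuousMap.coe_mk, H, h1, if_neg (not_le.2 one_pos), Set.Icc.coe_one,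
      one_mul, Set.projIcc_right]
    exact γ.target
  · by_cases hs : φ s ≤ 0
    · exact Or.inl ⟨σ s, by simp [g, H, hs]⟩
    · exact Or.inr ⟨Set.projIcc 0 1 zero_le_one (φ s), by simp [g, H, hs]⟩

theorem UniformlyLocallyConnected.isClosed_wildSet {X : Type*} [MetricSpace X] [CompleteSpace X]
    (hX : UniformlyLocallyConnected X) (n : ℕ) : IsClosed (wildSet n X) := by
  refine isClosed_of_closure_subset fun x hx => isWildPoint_iff_forall_dist_lt.2 fun ε hε => ?_
  obtain ⟨δ, hδ, hpath⟩ := hX.exists_path (half_pos hε)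
  obtain ⟨u, hu, hxu⟩ := Metric.mem_closure_iff.1 hx _ (lt_min hδ (half_pos hε))
  obtain ⟨f, hfu, hf, hfε⟩ := isWildPoint_iff_forall_dist_lt.1 hu _ (half_pos hε)
  obtain ⟨γ, hγ⟩ := hpath x u (hxu.trans_le (min_le_left _ _))
  obtain ⟨g, hgx, hfg, hg⟩ := exists_homotopic_of_path f hfu γ.symm
  refine ⟨g, hgx, hf.of_homotopic hfg, fun s => ?_⟩
  rcases hg s with ⟨s', hs'⟩ | ⟨t, ht⟩
  · calc dist (g s) x ≤ dist (f s') u + dist x u := hs' ▸ dist_triangle_right _ _ _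
      _ < ε / 2 + ε / 2 := add_lt_add (hfε s') (hxu.trans_le (min_le_right _ _))
      _ = ε := add_halves ε
  · exact ht ▸ (hγ _).trans (half_lt_self hε)

theorem stmt6_general {X : Type*} [TopologicalSpace X] [CompactSpace X]
    [LocallyConnectedSpace X] [TopologicalSpace.MetrizableSpace X] (n : ℕ) :
    IsClosed (wildSet n X) ∧ IsCompact (wildSet n X) ∧
    TopologicalSpace.MetrizableSpace ↥(wildSet n X) := by
  let := TopologicalSpace.metrizableSpaceMetric X
  have hclosed := uniformlyLocallyConnected_of_compactSpace.isClosed_wildSet (X := X) n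
  exact ⟨hclosed, hclosed.isCompact, inferInstance⟩

/-- the `π_n`-wild set of a Peano continuum is closed, hence a
compact metrizable space. -/
theorem stmt6 {X : Type*} [TopologicalSpace X] [CompactSpace X] [ConnectedSpace X]
    [LocallyConnectedSpace X] [TopologicalSpace.MetrizableSpace X] [Nonempty X] (n : ℕ) :
    IsClosed (wildSet n X) ∧ IsCompact (wildSet n X) ∧
    TopologicalSpace.MetrizableSpace ↥(wildSet n X) :=
  stmt6_general n
end

section
/- Let n ∈ ℕ, let I be any index set, and let (X_i)_{i∈I} be a family of path-connected Hausdorff topological spaces such that for all but finitely many i ∈ I, every continuous map S^n → X_i is inessential (i.e. X_i has trivial n-th homotopy group). Then for a point x = (x_i)_{i∈I} of the product Π_{i∈I} X_i (with the product topology), x is a π_n-wild point of Π_{i∈I} X_i if and only if there exists i ∈ I such that x_i is a π_n-wild point of X_i. -/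
open Filter Topology

open ContinuousMap

/-! A sphere in a product is inessential as soon as all its coordinates are, since homotopies
can be taken coordinatewise. So an essential sequence converging to the constant map at `x` has,
for each term, an essential coordinate lying in the finite set of factors with essential spheres;
one such coordinate recurs infinitely often and its subsequence witnesses wildness of that
coordinate. Conversely, the factor `X i` is a retract of the product through
`y ↦ Function.update x i y`, and a section of a retraction carries essential maps to essential
maps, hence wild points to wild points. -/

section

variable {n : ℕ} {X Y : Type*} [TopologicalSpace X] [TopologicalSpace Y]

theorem Essential.of_comp {g : C(X, Y)} {f : C(Sph n, X)} (h : Essential (g.comp f)) :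
    Essential f :=
  fun x hx => h (g x) ((Homotopic.refl g).comp hx)

theorem Essential.comp_of_leftInverse {e : C(X, Y)} {r : C(Y, X)} (hre : r.comp e = .id X)
    {f : C(Sph n, X)} (hf : Essential f) : Essential (e.comp f) :=
  Essential.of_comp (g := r) (by rwa [← comp_assoc, hre, id_comp])

theorem IsWildPoint.map_of_frequently_essential (g : C(X, Y)) {f : ℕ → C(Sph n, X)} {x : X}
    (hbase : ∀ k, f k (spherePt n) = x) (hlim : Tendsto f atTop (𝓝 (const _ x)))
    (hfreq : ∃ᶠ k in atTop, Essential (g.comp (f k))) : IsWildPoint n (g x) := by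
  obtain ⟨φ, hφ, hess⟩ := extraction_of_frequently_atTop hfreq
  refine ⟨fun m => g.comp (f (φ m)), fun m => by simp [hbase], hess, ?_⟩
  simpa [Function.comp_def] using
    ((continuous_postcomp g).tendsto _).comp (hlim.comp hφ.tendsto_atTop)

theorem IsWildPoint.map_of_leftInverse {e : C(X, Y)} {r : C(Y, X)} (hre : r.comp e = .id X)
    {x : X} (hx : IsWildPoint n x) : IsWildPoint n (e x) := by
  obtain ⟨f, hbase, hess, hlim⟩ := hx
  exact .map_of_frequently_essential e hbase hlim
    (.of_forall fun k => (hess k).comp_of_leftInverse hre)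

end

theorem Essential.exists_essential_eval_comp {n : ℕ} {ι : Type*} {X : ι → Type*}
    [∀ i, TopologicalSpace (X i)] {f : C(Sph n, ∀ i, X i)} (hf : Essential f) :
    ∃ i, Essential ((eval i).comp f) := by
  by_contra! h
  simp only [Essential, not_forall, not_not] at h
  choose y hy using h
  exact hf y (Homotopic.pi hy)

theorem stmt10_general {I : Type*} (n : ℕ) (X : I → Type*)
    [∀ i, TopologicalSpace (X i)]
    (hfin : {i : I | ∃ g : C(Sph n, X i), Essential g}.Finite)
    (x : ∀ i, X i) :
    IsWildPoint n x ↔ ∃ i, IsWildPoint n (x i) := by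
  constructor
  · rintro ⟨f, hbase, hess, hlim⟩
    have hfreq : ∃ᶠ k in atTop, ∃ i ∈ {i : I | ∃ g : C(Sph n, X i), Essential g},
        Essential ((eval i).comp (f k)) :=
      .of_forall fun k =>
        let ⟨i, hi⟩ := (hess k).exists_essential_eval_comp
        ⟨i, ⟨_, hi⟩, hi⟩
    obtain ⟨i, -, hi⟩ := hfin.frequently_exists.mp hfreq
    exact ⟨i, .map_of_frequently_essential (eval i) hbase hlim hi⟩
  · classical
    rintro ⟨i, hi⟩
    let e : C(X i, ∀ j, X j) := ⟨Function.update x i, continuous_const.update i continuous_id⟩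
    have hre : (eval i).comp e = .id (X i) := by ext; simp [e]
    simpa [e] using hi.map_of_leftInverse hre

/-- wild points of a product where all but finitely many factors
have trivial `n`-th homotopy group. -/
theorem stmt10 {I : Type*} (n : ℕ) (X : I → Type*)
    [∀ i, TopologicalSpace (X i)] [∀ i, T2Space (X i)] [∀ i, PathConnectedSpace (X i)]
    (hfin : {i : I | ∃ g : C(Sph n, X i), Essential g}.Finite)
    (x : ∀ i, X i) :
    IsWildPoint n x ↔ ∃ i, IsWildPoint n (x i) :=
  stmt10_general n X hfin x
end

section
/- Let n ∈ ℕ, let X, Y be Hausdorff topological spaces, and let f : X → Y and g : Y → X be continuous maps with g ∘ f homotopic to the identity of X and f ∘ g homotopic to the identity of Y. If every continuous path [0,1] → w_n(X) is constant and every continuous path [0,1] → w_n(Y) is constant (i.e. both wild sets are totally path-disconnected), then w_n(X) and w_n(Y), with their subspace topologies, are homeomorphic. -/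
open Filter Topology

/-
If `g ∘ f ≃ id`, then `g ∘ f ∘ u ≃ u` for every `u : S^n → X`, so `f` carries essential maps to
essential maps and hence wild points to wild points; in particular `f` and `g` restrict to maps
between the wild sets. A homotopy `H` from `g ∘ f` to `id` moves a wild point `x` along the path
`t ↦ H (t, x)`, and every stage `H t` is itself homotopic to `id`, so this path stays inside the
wild set. The wild set being totally path-disconnected, the path is constant: `g (f x) = x`.
-/

open ContinuousMap Set

theorem piNInjective_of_homotopic_id {X Y : Type*} [TopologicalSpace X] [TopologicalSpace Y]
    (n : ℕ) {f : C(X, Y)} {g : C(Y, X)} (hgf : (g.comp f).Homotopic (ContinuousMap.id X)) :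
    PiNInjective n f := by
  rintro u ⟨y, hy⟩
  refine ⟨g y, ?_⟩
  have hu : ((g.comp f).comp u).Homotopic u := by
    simpa only [id_comp] using hgf.comp (Homotopic.refl u)
  exact hu.symm.trans (by simpa only [comp_assoc, comp_const] using (Homotopic.refl g).comp hy)

theorem Essential.comp {X Y : Type*} [TopologicalSpace X] [TopologicalSpace Y] {n : ℕ}
    {f : C(X, Y)} (hf : PiNInjective n f) {u : C(Sph n, X)} (hu : Essential u) :
    Essential (f.comp u) := fun y hy => by
  obtain ⟨x, hx⟩ := hf u ⟨y, hy⟩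
  exact hu x hx

theorem IsWildPoint.map {X Y : Type*} [TopologicalSpace X] [TopologicalSpace Y] {n : ℕ}
    {f : C(X, Y)} (hf : PiNInjective n f) {x : X} (hx : IsWildPoint n x) :
    IsWildPoint n (f x) := by
  obtain ⟨u, hbase, hess, hlim⟩ := hx
  refine ⟨fun k => f.comp (u k), fun k => by simp [hbase k], fun k => (hess k).comp hf, ?_⟩
  simpa only [comp_const, Function.comp_def] using ((continuous_postcomp f).tendsto _).comp hlim

theorem mapsTo_wildSet_of_homotopic_id {X Y : Type*} [TopologicalSpace X] [TopologicalSpace Y]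
    (n : ℕ) {f : C(X, Y)} {g : C(Y, X)} (hgf : (g.comp f).Homotopic (ContinuousMap.id X)) :
    MapsTo f (wildSet n X) (wildSet n Y) :=
  fun _ hx => IsWildPoint.map (piNInjective_of_homotopic_id n hgf) hx

theorem ContinuousMap.Homotopy.curry_homotopic {X Y : Type*} [TopologicalSpace X]
    [TopologicalSpace Y] {f₀ f₁ : C(X, Y)} (F : Homotopy f₀ f₁) (t : unitInterval) :
    (F.curry t).Homotopic f₁ :=
  ⟨{ toContinuousMap := F.toContinuousMap.comp ⟨fun p => (max t p.1, p.2), by fun_prop⟩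
     map_zero_left := fun x => by simp
     map_one_left := fun x => by simp [← Subtype.coe_le_coe, t.2.2] }⟩

theorem eqOn_wildSet_of_homotopic_id {Z : Type*} [TopologicalSpace Z] {n : ℕ} {h : C(Z, Z)}
    (hh : h.Homotopic (ContinuousMap.id Z))
    (hZ : ∀ p : C(unitInterval, ↥(wildSet n Z)), ∀ t t' : unitInterval, p t = p t') :
    EqOn h id (wildSet n Z) := by
  obtain ⟨H⟩ := hh
  intro z hz
  have hstage (t : unitInterval) : IsWildPoint n (H.curry t z) :=
    IsWildPoint.map (piNInjective_of_homotopic_id (g := ContinuousMap.id Z) n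
      (by simpa only [id_comp] using H.curry_homotopic t)) hz
  let p : C(unitInterval, ↥(wildSet n Z)) := ⟨fun t => ⟨H (t, z), hstage t⟩, by fun_prop⟩
  simpa [p] using congrArg Subtype.val (hZ p 0 1)

def ContinuousMap.homeomorphOfInvOn {X Y : Type*} [TopologicalSpace X] [TopologicalSpace Y]
    (f : C(X, Y)) (g : C(Y, X)) {s : Set X} {t : Set Y} (hf : MapsTo f s t) (hg : MapsTo g t s)
    (hinv : InvOn g f s t) : s ≃ₜ t where
  toFun := hf.restrict f s t
  invFun := hg.restrict g t s
  left_inv x := Subtype.ext (hinv.1 x.2)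
  right_inv y := Subtype.ext (hinv.2 y.2)
  continuous_toFun := f.continuous.restrict hf
  continuous_invFun := g.continuous.restrict hg

theorem stmt12_general {X Y : Type*} [TopologicalSpace X] [TopologicalSpace Y]
    (n : ℕ) (f : C(X, Y)) (g : C(Y, X))
    (hgf : (g.comp f).Homotopic (ContinuousMap.id X))
    (hfg : (f.comp g).Homotopic (ContinuousMap.id Y))
    (hX : ∀ p : C(unitInterval, ↥(wildSet n X)), ∀ t t' : unitInterval, p t = p t')
    (hY : ∀ p : C(unitInterval, ↥(wildSet n Y)), ∀ t t' : unitInterval, p t = p t') :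
    Nonempty (↥(wildSet n X) ≃ₜ ↥(wildSet n Y)) :=
  ⟨f.homeomorphOfInvOn g (mapsTo_wildSet_of_homotopic_id n hgf)
    (mapsTo_wildSet_of_homotopic_id n hfg)
    ⟨eqOn_wildSet_of_homotopic_id hgf hX, eqOn_wildSet_of_homotopic_id hfg hY⟩⟩

/-- homotopy equivalent spaces with totally path-disconnected wild
sets have homeomorphic wild sets. -/
theorem stmt12 {X Y : Type*} [TopologicalSpace X] [TopologicalSpace Y]
    [T2Space X] [T2Space Y] (n : ℕ) (f : C(X, Y)) (g : C(Y, X))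
    (hgf : (g.comp f).Homotopic (ContinuousMap.id X))
    (hfg : (f.comp g).Homotopic (ContinuousMap.id Y))
    (hX : ∀ p : C(unitInterval, ↥(wildSet n X)), ∀ t t' : unitInterval, p t = p t')
    (hY : ∀ p : C(unitInterval, ↥(wildSet n Y)), ∀ t t' : unitInterval, p t = p t') :
    Nonempty (↥(wildSet n X) ≃ₜ ↥(wildSet n Y)) :=
  stmt12_general n f g hgf hfg hX hY
end
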